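/- For 0 < σ < 1, real μ with μ - σk ∉ ℤ for all integers k ≥ 0, ϑ = 1/2 - μ, δ = 1 - μ, and real x: φ(-σ,μ;x) = (1/(2π)) [ e^{πiϑ} Ψ(x e^{πiσ}) + e^{-πiϑ} Ψ(x e^{-πiσ}) ], where φ(-σ,μ;z) = Σ_{k≥0} z^k/(k! Γ(μ-σk)) and Ψ(z) = Σ_{k≥0} (z^k/k!) Γ(σk+δ). -/

import Mathlib

open Real Complex

/-- The Wright function `φ(-σ, μ; z)`. -/
noncomputable def wright (σ μ : ℝ) (z : ℂ) : ℂ :=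
  ∑' k : ℕ, z ^ k * ((Real.Gamma (μ - σ * k))⁻¹ : ℝ) / (k.factorial : ℂ)

/-- The auxiliary function `Ψ(z) = Σ_{k≥0} Γ(σk + δ) z^k / k!`. -/
noncomputable def Psi (σ δ : ℝ) (z : ℂ) : ℂ :=
  ∑' k : ℕ, z ^ k / (k.factorial : ℂ) * (Real.Gamma (σ * k + δ) : ℝ)

/-! Termwise, the reflection formula gives `1 / Γ(μ - σk) = Γ(σk + δ) sin(π(μ - σk)) / π`, and
`sin(π(μ - σk)) = cos(π(ϑ + σk))` is the average of `e^{±πi(ϑ + σk)}`. Splitting the sum in two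
needs the convergence of `Ψ`, which follows from the ratio test: log-convexity of `Γ` gives
`Γ(s + σ) ≤ Γ(s) s^σ`, so consecutive terms of `Ψ(z)` have ratio `O(|z| k^(σ-1)) → 0`. -/

open Filter

theorem Real.Gamma_add_le_Gamma_mul_rpow {s σ : ℝ} (hs : 0 < s) (hσ₀ : 0 < σ) (hσ₁ : σ < 1) :
    Real.Gamma (s + σ) ≤ Real.Gamma s * s ^ σ := by
  have hΓ := (Real.Gamma_pos_of_pos hs).le
  have h := Real.Gamma_mul_add_mul_le_rpow_Gamma_mul_rpow_Gamma hs (by linarith : 0 < s + 1)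
    (sub_pos.2 hσ₁) hσ₀ (by ring)
  rw [Real.Gamma_add_one hs.ne', mul_rpow hs.le hΓ, mul_left_comm, ← rpow_add' hΓ (by simp),
    sub_add_cancel, rpow_one] at h
  rwa [show s + σ = (1 - σ) * s + σ * (s + 1) by ring, mul_comm (Real.Gamma s)]

theorem eventually_norm_Gamma_succ_le {σ : ℝ} (hσ₀ : 0 < σ) (hσ₁ : σ < 1) (δ : ℝ) :
    ∀ᶠ k : ℕ in atTop,
      ‖Real.Gamma (σ * (k + 1 : ℕ) + δ)‖ ≤ ((k : ℝ) + 1) ^ σ * ‖Real.Gamma (σ * k + δ)‖ := by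
  have hpos := (tendsto_natCast_atTop_atTop.const_mul_atTop hσ₀).eventually_gt_atTop (-δ)
  have hle := (tendsto_natCast_atTop_atTop.const_mul_atTop (sub_pos.2 hσ₁)).eventually_ge_atTop
    (δ - 1)
  filter_upwards [hpos, hle] with k hk hk'
  set a := σ * k + δ
  have ha : 0 < a := by linarith
  have hΓ := Real.Gamma_pos_of_pos ha
  have hsucc : σ * (k + 1 : ℕ) + δ = a + σ := by push_cast; ring
  rw [hsucc, norm_of_nonneg (Real.Gamma_pos_of_pos (by linarith)).le, norm_of_nonneg hΓ.le]
  calc Real.Gamma (a + σ) ≤ Real.Gamma a * a ^ σ := Real.Gamma_add_le_Gamma_mul_rpow ha hσ₀ hσ₁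
    _ ≤ ((k : ℝ) + 1) ^ σ * Real.Gamma a := by
      rw [mul_comm]
      exact mul_le_mul_of_nonneg_right (rpow_le_rpow ha.le (by linarith) hσ₀.le) hΓ.le

theorem summable_pow_div_factorial_mul_Gamma {σ : ℝ} (hσ₀ : 0 < σ) (hσ₁ : σ < 1) (δ : ℝ)
    (z : ℂ) :
    Summable fun k : ℕ => z ^ k / (k.factorial : ℂ) * (Real.Gamma (σ * k + δ) : ℂ) := by
  refine summable_of_ratio_norm_eventually_le (r := 1 / 2) (by norm_num) ?_
  have hsmall : ∀ᶠ k : ℕ in atTop, ‖z‖ * ((k : ℝ) + 1) ^ (σ - 1) ≤ 1 / 2 := by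
    have := ((tendsto_rpow_neg_atTop (sub_pos.2 hσ₁)).comp
      (tendsto_atTop_add_const_right _ 1 tendsto_natCast_atTop_atTop)).const_mul ‖z‖
    rw [mul_zero] at this
    simpa using this.eventually_le_const (by norm_num : (0 : ℝ) < 1 / 2)
  filter_upwards [eventually_norm_Gamma_succ_le hσ₀ hσ₁ δ, hsmall] with k hΓ hk
  have hk1 : (0 : ℝ) < k + 1 := by positivity
  simp only [norm_mul, norm_div, norm_pow, Complex.norm_natCast, Complex.norm_real]
  calc ‖z‖ ^ (k + 1) / (k + 1).factorial * ‖Real.Gamma (σ * (k + 1 : ℕ) + δ)‖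
      ≤ ‖z‖ ^ (k + 1) / (k + 1).factorial * (((k : ℝ) + 1) ^ σ * ‖Real.Gamma (σ * k + δ)‖) := by
        gcongr
    _ = ‖z‖ * ((k : ℝ) + 1) ^ (σ - 1) * (‖z‖ ^ k / k.factorial * ‖Real.Gamma (σ * k + δ)‖) := by
        rw [rpow_sub_one hk1.ne', Nat.factorial_succ, pow_succ]
        push_cast
        field_simp
    _ ≤ 1 / 2 * (‖z‖ ^ k / k.factorial * ‖Real.Gamma (σ * k + δ)‖) := by gcongr

theorem Real.Gamma_inv_eq_Gamma_one_sub_mul_sin {s : ℝ} (hs : Real.sin (π * s) ≠ 0) :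
    (Real.Gamma s)⁻¹ = Real.Gamma (1 - s) * Real.sin (π * s) / π := by
  have h := Real.Gamma_mul_Gamma_one_sub s
  have hΓ : Real.Gamma s ≠ 0 := by
    rintro h0
    rw [h0, zero_mul] at h
    exact div_ne_zero pi_ne_zero hs h.symm
  rw [eq_div_iff hs] at h
  field_simp
  rw [mul_comm s π]
  linear_combination -h

theorem Complex.exp_pi_mul_I_mul_add_exp_neg (θ φ : ℂ) (k : ℕ) :
    exp (π * I * θ) * exp (π * I * φ) ^ k + exp (-(π * I * θ)) * exp (-(π * I * φ)) ^ k =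
      2 * cos (π * (θ + k * φ)) := by
  rw [← exp_nat_mul, ← exp_nat_mul, ← exp_add, ← exp_add, two_cos]
  ring_nf

theorem stmt_9 (σ μ : ℝ) (hσ : 0 < σ ∧ σ < 1)
    (hμ : ∀ k : ℕ, ∀ m : ℤ, μ - σ * k ≠ (m : ℝ)) (x : ℝ) :
    wright σ μ (x : ℂ)
      = (1 / (2 * π)) *
          (Complex.exp (π * Complex.I * ((1 / 2 : ℝ) - μ)) *
              Psi σ (1 - μ) ((x : ℂ) * Complex.exp (π * Complex.I * (σ : ℝ))) +
            Complex.exp (-(π * Complex.I * ((1 / 2 : ℝ) - μ))) *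
              Psi σ (1 - μ) ((x : ℂ) * Complex.exp (-(π * Complex.I * (σ : ℝ))))) := by
  obtain ⟨hσ₀, hσ₁⟩ := hσ
  have hPsi := summable_pow_div_factorial_mul_Gamma hσ₀ hσ₁ (1 - μ)
  unfold wright Psi
  rw [← tsum_mul_left, ← tsum_mul_left, ← ((hPsi _).mul_left _).tsum_add ((hPsi _).mul_left _),
    ← tsum_mul_left]
  refine tsum_congr fun k => ?_
  have hexp := exp_pi_mul_I_mul_add_exp_neg ((1 / 2 : ℝ) - μ) σ k
  have hcos : Complex.cos (π * ((1 / 2 : ℝ) - μ + k * σ)) = Real.sin (π * (μ - σ * k)) := by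
    rw [← Real.cos_pi_div_two_sub, Complex.ofReal_cos]
    push_cast
    ring_nf
  have hsin : Real.sin (π * (μ - σ * k)) ≠ 0 := Real.sin_ne_zero_iff.2 fun m hm =>
    hμ k m (mul_left_cancel₀ pi_ne_zero (by linarith))
  rw [Real.Gamma_inv_eq_Gamma_one_sub_mul_sin hsin, mul_pow, mul_pow,
    show 1 - (μ - σ * k) = σ * k + (1 - μ) by ring]
  rw [hcos] at hexp
  push_cast at hexp ⊢
  linear_combination (-(x ^ k * Real.Gamma (σ * k + (1 - μ)) / (2 * π * k.factorial) : ℂ)) * hexp
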